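/- arXiv:0807.0035 — 2 statements merged into one kernel-verified Lean document; each statement's English description precedes it below -/
import Mathlib

section
/- Let $C$ be the affine space of continuous functions on a compact metric space $X$, let $F_k : C \to \mathbb{R}$ be affine functionals of the form $F_k(\phi) = a_k + \int_X \phi \, d\mu_k$ for probability measures $\mu_k$, and let $G : C \to \mathbb{R}$ satisfy: (i) $\liminf_k F_k(\phi) \ge G(\phi)$ for all $\phi \in C$; (ii) $\lim_k F_k(\phi_0) = G(\phi_0)$ for some fixed $\phi_0$; (iii) for each continuous $v$, the function $t \mapsto G(\phi_0 + t v)$ is differentiable at $0$ with derivative $\int_X v \, d\mu$ for a fixed probability measure $\mu$. Then $\mu_k \to \mu$ weakly. -/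
open Filter MeasureTheory

theorem variational_equidistribution
    {X : Type*} [MetricSpace X] [CompactSpace X]
    [MeasurableSpace X] [BorelSpace X]
    (a : ℕ → ℝ)
    (μk : ℕ → Measure X) [∀ k, IsProbabilityMeasure (μk k)]
    (μ : Measure X) [IsProbabilityMeasure μ]
    (G : C(X, ℝ) → ℝ) (φ₀ : C(X, ℝ))
    (hliminf : ∀ φ : C(X, ℝ),
      G φ ≤ liminf (fun k => a k + ∫ x, φ x ∂(μk k)) atTop)
    (hlim0 : Tendsto (fun k => a k + ∫ x, φ₀ x ∂(μk k)) atTop (nhds (G φ₀)))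
    (hderiv : ∀ v : C(X, ℝ),
      HasDerivAt (fun t : ℝ => G (φ₀ + t • v)) (∫ x, v x ∂μ) 0) :
    ∀ v : C(X, ℝ),
      Tendsto (fun k => ∫ x, v x ∂(μk k)) atTop (nhds (∫ x, v x ∂μ)) := by
  intro v
  have hint : ∀ (f : C(X, ℝ)) (ν : Measure X) [IsProbabilityMeasure ν],
      Integrable (fun x => f x) ν := by
    intro f ν _
    rw [← integrableOn_univ]
    exact (map_continuous f).continuousOn.integrableOn_compact isCompact_univ
  set b : ℕ → ℝ := fun k => ∫ x, v x ∂(μk k) with hbdef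
  set I : ℝ := ∫ x, v x ∂μ with hIdef
  have hbound : ∀ k, |b k| ≤ ‖v‖ := by
    intro k
    calc |b k| = ‖∫ x, v x ∂(μk k)‖ := rfl
      _ ≤ ‖v‖ * ((μk k) Set.univ).toReal :=
        norm_integral_le_of_norm_le_const
          (Eventually.of_forall fun x => v.norm_coe_le_norm x)
      _ = ‖v‖ := by simp
  have hbdd_above : IsBoundedUnder (· ≤ ·) atTop b :=
    isBoundedUnder_of ⟨‖v‖, fun k => (abs_le.1 (hbound k)).2⟩
  have hbdd_below : IsBoundedUnder (· ≥ ·) atTop b :=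
    isBoundedUnder_of ⟨-‖v‖, fun k => (abs_le.1 (hbound k)).1⟩
  set L : ℝ := liminf b atTop with hLdef
  set S : ℝ := limsup b atTop with hSdef
  set c : ℕ → ℝ := fun k => a k + ∫ x, φ₀ x ∂(μk k) with hcdef
  have hc : Tendsto c atTop (nhds (G φ₀)) := hlim0
  -- key inequality : G (φ₀ + t • v) ≤ G φ₀ + liminf (t * b)
  have key : ∀ t : ℝ, G (φ₀ + t • v) ≤ G φ₀ + liminf (fun k => t * b k) atTop := by
    intro t
    have habs : ∀ k, |t * b k| ≤ |t| * ‖v‖ := fun k => by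
      rw [abs_mul]
      exact mul_le_mul_of_nonneg_left (hbound k) (abs_nonneg t)
    have hw_above : IsBoundedUnder (· ≤ ·) atTop (fun k => t * b k) :=
      isBoundedUnder_of ⟨|t| * ‖v‖, fun k => (abs_le.1 (habs k)).2⟩
    have hw_below : IsBoundedUnder (· ≥ ·) atTop (fun k => t * b k) :=
      isBoundedUnder_of ⟨-(|t| * ‖v‖), fun k => (abs_le.1 (habs k)).1⟩
    have h2 := hliminf (φ₀ + t • v)
    have hdecomp : (fun k => a k + ∫ x, (φ₀ + t • v) x ∂(μk k))
        = c + fun k => t * b k := by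
      funext k
      have h1 : ∫ x, (φ₀ + t • v) x ∂(μk k)
          = (∫ x, φ₀ x ∂(μk k)) + t * ∫ x, v x ∂(μk k) := by
        simp only [ContinuousMap.add_apply, ContinuousMap.smul_apply, smul_eq_mul]
        rw [integral_add (hint φ₀ _) ((hint v _).const_mul t), integral_const_mul]
      simp only [Pi.add_apply, hcdef, hbdef, h1]
      ring
    rw [hdecomp] at h2
    have h3 : liminf (c + fun k => t * b k) atTop
        ≤ limsup c atTop + liminf (fun k => t * b k) atTop :=
      liminf_add_le hc.isBoundedUnder_ge hc.isBoundedUnder_le hw_below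
        hw_above.isCoboundedUnder_ge
    rw [hc.limsup_eq] at h3
    exact h2.trans h3
  set g : ℝ → ℝ := fun t => G (φ₀ + t • v) with hgdef
  have hg0 : g 0 = G φ₀ := by simp [hgdef]
  -- for t > 0 : g t - g 0 ≤ t * L
  have keyP : ∀ t : ℝ, 0 < t → g t - g 0 ≤ t * L := by
    intro t ht
    have hmono : Monotone (fun x : ℝ => t * x) := fun x y hxy => by
      dsimp only; nlinarith
    have heq : t * liminf b atTop
        = liminf (fun k => t * b k) atTop :=
      hmono.map_liminf_of_continuousAt b (continuous_const.mul continuous_id).continuousAt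
        hbdd_above.isCoboundedUnder_ge hbdd_below
    have := key t
    rw [hg0]
    have : G (φ₀ + t • v) ≤ G φ₀ + t * L := by
      rw [hLdef, heq]; exact key t
    linarith
  -- for t < 0 : g t - g 0 ≤ t * S
  have keyN : ∀ t : ℝ, t < 0 → g t - g 0 ≤ t * S := by
    intro t ht
    have hanti : Antitone (fun x : ℝ => t * x) := fun x y hxy => by
      dsimp only; nlinarith
    have heq : t * limsup b atTop
        = liminf (fun k => t * b k) atTop :=
      hanti.map_limsup_of_continuousAt b (continuous_const.mul continuous_id).continuousAt
        hbdd_above hbdd_below.isCoboundedUnder_le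
    rw [hg0]
    have : G (φ₀ + t • v) ≤ G φ₀ + t * S := by
      rw [hSdef, heq]; exact key t
    linarith
  have hslope := hasDerivAt_iff_tendsto_slope.mp (hderiv v)
  -- I ≤ L
  have hIL : I ≤ L := by
    have hsl : Tendsto (slope g 0) (nhdsWithin 0 (Set.Ioi 0)) (nhds I) :=
      hslope.mono_left (nhdsWithin_mono 0 fun x hx => hx.ne')
    refine le_of_tendsto hsl ?_
    filter_upwards [self_mem_nhdsWithin] with t (ht : (0:ℝ) < t)
    have hts : slope g 0 t = (g t - g 0) / t := by
      simp [slope_def_field, div_eq_inv_mul]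
    rw [hts, div_le_iff₀ ht]
    have := keyP t ht
    linarith [this]
  -- S ≤ I
  have hSI : S ≤ I := by
    have hsl : Tendsto (slope g 0) (nhdsWithin 0 (Set.Iio 0)) (nhds I) :=
      hslope.mono_left (nhdsWithin_mono 0 fun x hx => hx.ne)
    refine ge_of_tendsto hsl ?_
    filter_upwards [self_mem_nhdsWithin] with t (ht : t < (0:ℝ))
    have hts : slope g 0 t = (g t - g 0) / t := by
      simp [slope_def_field, div_eq_inv_mul]
    rw [hts, le_div_iff_of_neg ht]
    have := keyN t ht
    linarith [this]
  have hLS : L ≤ S := liminf_le_limsup hbdd_above hbdd_below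
  have hL : liminf b atTop = I := le_antisymm (by rw [← hLdef]; linarith) hIL
  have hS : limsup b atTop = I := le_antisymm hSI (by rw [← hSdef]; linarith)
  exact tendsto_of_liminf_eq_limsup hL hS hbdd_above hbdd_below
end

section
/- Let $X$ be a compact metric space, $(\mu_k)$ probability measures on $X$, $\mu$ a probability measure, $(a_k)$ real numbers with $a_k \to a$. Suppose for every continuous $v : X \to \mathbb{R}$ and every $t \in \mathbb{R}$: $\liminf_k \big(a_k + t \int v\, d\mu_k\big) \ge g_v(t)$ where $g_v : \mathbb{R} \to \mathbb{R}$ is differentiable at $0$ with $g_v(0) = a$ and $g_v'(0) = \int v \, d\mu$. Then $\int v \, d\mu_k \to \int v\, d\mu$ for every continuous $v$. -/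
open Filter MeasureTheory

theorem per_direction_variational
    {X : Type*} [MetricSpace X] [CompactSpace X]
    [MeasurableSpace X] [BorelSpace X]
    (μk : ℕ → Measure X) [∀ k, IsProbabilityMeasure (μk k)]
    (μ : Measure X) [IsProbabilityMeasure μ]
    (a : ℕ → ℝ) (A : ℝ) (ha : Tendsto a atTop (nhds A))
    (g : C(X, ℝ) → ℝ → ℝ)
    (hliminf : ∀ v : C(X, ℝ), ∀ t : ℝ,
      g v t ≤ liminf (fun k => a k + t * ∫ x, v x ∂(μk k)) atTop)
    (hgd : ∀ v : C(X, ℝ), DifferentiableAt ℝ (g v) 0)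
    (hg0 : ∀ v : C(X, ℝ), g v 0 = A)
    (hg'0 : ∀ v : C(X, ℝ), deriv (g v) 0 = ∫ x, v x ∂μ) :
    ∀ v : C(X, ℝ),
      Tendsto (fun k => ∫ x, v x ∂(μk k)) atTop (nhds (∫ x, v x ∂μ)) := by
  intro v
  set I : ℕ → ℝ := fun k => ∫ x, v x ∂(μk k) with hI
  have hIb : ∀ k, |I k| ≤ ‖v‖ := by
    intro k
    have := MeasureTheory.norm_integral_le_of_norm_le_const
      (μ := μk k) (f := fun x => v x) (C := ‖v‖)
      (Eventually.of_forall fun x => v.norm_coe_le_norm x)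
    simpa [Real.norm_eq_abs] using this
  have hbb : IsBoundedUnder (· ≥ ·) atTop I :=
    isBoundedUnder_of ⟨-‖v‖, fun k => (abs_le.mp (hIb k)).1⟩
  have hba : IsBoundedUnder (· ≤ ·) atTop I :=
    isBoundedUnder_of ⟨‖v‖, fun k => (abs_le.mp (hIb k)).2⟩
  set L := liminf I atTop with hL
  set M := limsup I atTop with hM
  -- derivative as limit of slopes
  have hslope : Tendsto (slope (g v) 0) (nhdsWithin 0 {x | x ≠ 0})
      (nhds (∫ x, v x ∂μ)) := by
    have := (hasDerivAt_iff_tendsto_slope).mp (hgd v).hasDerivAt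
    rwa [hg'0 v] at this
  -- Step 1: for t > 0, g v t ≤ A + t * L
  have hstep : ∀ t : ℝ, 0 < t → g v t ≤ A + t * L := by
    intro t ht
    refine le_trans (hliminf v t) ?_
    refine le_of_forall_pos_le_add fun ε hε => ?_
    have hfreq : ∃ᶠ k in atTop, I k < L + ε / (2 * t) := by
      refine frequently_lt_of_liminf_lt hba.isCoboundedUnder_ge ?_
      have : 0 < ε / (2 * t) := by positivity
      linarith
    have hA : ∀ᶠ k in atTop, a k < A + ε / 2 :=
      ha.eventually (eventually_lt_nhds (by linarith))
    refine liminf_le_of_frequently_le ?_ ?_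
    · refine (hfreq.and_eventually hA).mono fun k ⟨h1, h2⟩ => ?_
      have ht' : t * (ε / (2 * t)) = ε / 2 := by
        field_simp
      nlinarith
    · obtain ⟨c, hc⟩ := ha.bddBelow_range
      refine isBoundedUnder_of ⟨c - t * ‖v‖, fun k => ?_⟩
      have h1 : c ≤ a k := hc ⟨k, rfl⟩
      have h2 : -‖v‖ ≤ I k := (abs_le.mp (hIb k)).1
      have h3 : t * (-‖v‖) ≤ t * I k := mul_le_mul_of_nonneg_left h2 ht.le
      simp only [ge_iff_le]
      nlinarith
  -- Step 2: for t < 0, g v t ≤ A + t * M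
  have hstep2 : ∀ t : ℝ, t < 0 → g v t ≤ A + t * M := by
    intro t ht
    refine le_trans (hliminf v t) ?_
    refine le_of_forall_pos_le_add fun ε hε => ?_
    have hfreq : ∃ᶠ k in atTop, M - ε / (2 * (-t)) < I k := by
      refine frequently_lt_of_lt_limsup hbb.isCoboundedUnder_le ?_
      have : 0 < ε / (2 * (-t)) := div_pos hε (by linarith)
      linarith
    have hA : ∀ᶠ k in atTop, a k < A + ε / 2 :=
      ha.eventually (eventually_lt_nhds (by linarith))
    refine liminf_le_of_frequently_le ?_ ?_
    · refine (hfreq.and_eventually hA).mono fun k ⟨h1, h2⟩ => ?_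
      have ht0 : t ≠ 0 := ne_of_lt ht
      have ht' : (-t) * (ε / (2 * (-t))) = ε / 2 := by
        field_simp
      nlinarith
    · obtain ⟨c, hc⟩ := ha.bddBelow_range
      refine isBoundedUnder_of ⟨c + t * ‖v‖, fun k => ?_⟩
      have h1 : c ≤ a k := hc ⟨k, rfl⟩
      have h2 : I k ≤ ‖v‖ := (abs_le.mp (hIb k)).2
      have h3 : t * ‖v‖ ≤ t * I k := mul_le_mul_of_nonpos_left h2 ht.le
      simp only [ge_iff_le]
      nlinarith
  -- liminf bound: ∫ v ≤ L
  have hLlb : (∫ x, v x ∂μ) ≤ L := by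
    have hmono : Tendsto (slope (g v) 0) (nhdsWithin 0 (Set.Ioi 0))
        (nhds (∫ x, v x ∂μ)) :=
      hslope.mono_left (nhdsWithin_mono 0 fun x hx => ne_of_gt hx)
    refine le_of_tendsto hmono ?_
    filter_upwards [self_mem_nhdsWithin] with t ht
    have h := hstep t ht
    have h0 : slope (g v) 0 t = (g v t - A) / t := by
      simp [slope_def_field, hg0 v]
    rw [h0, div_le_iff₀ ht]
    nlinarith
  -- limsup bound: M ≤ ∫ v
  have hMub : M ≤ (∫ x, v x ∂μ) := by
    have hmono : Tendsto (slope (g v) 0) (nhdsWithin 0 (Set.Iio 0))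
        (nhds (∫ x, v x ∂μ)) :=
      hslope.mono_left (nhdsWithin_mono 0 fun x hx => ne_of_lt hx)
    refine ge_of_tendsto hmono ?_
    filter_upwards [self_mem_nhdsWithin] with t ht
    have h := hstep2 t ht
    have h0 : slope (g v) 0 t = (g v t - A) / t := by
      simp [slope_def_field, hg0 v]
    rw [h0, le_div_iff_of_neg ht]
    nlinarith
  exact tendsto_of_le_liminf_of_limsup_le hLlb hMub hba hbb
end
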